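/- arXiv:2006.12130 — 4 statements merged into one kernel-verified Lean document; each statement's English description precedes it below -/
import Mathlib

section
/- Let F be a bounded family in L²(ℝ^N). Then F is relatively compact in L²(ℝ^N) if and only if both of the following hold: (i) the family of Fourier transforms F̂ = {f̂ : f ∈ F} is L²-equicontinuous, i.e. for every ε > 0 there exists an open neighbourhood U₀ of 0 in ℝ^N such that for all y ∈ U₀ and all f ∈ F one has ∫_{ℝ^N} |f̂(x+y) − f̂(x)|² dx < ε; and (ii) F̂ is L²-equivanishing, i.e. for every ε > 0 there exists a compact set K ⊂ ℝ^N such that for all f ∈ F one has ∫_{ℝ^N∖K} |f̂(x)|² dx < ε. -/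
open MeasureTheory Real Complex
open scoped FourierTransform ENNReal
open Filter Set Topology

/-!
Since `T` is an isometry, `F` is totally bounded exactly when `T '' F` is, so the theorem is the
Kolmogorov–Riesz criterion in `L²(ℝᴺ)` applied to `T '' F`.

A totally bounded family is uniformly close to finitely many functions. Translation is continuous
on `L²` and every `L²` function is close to a compactly supported one, which gives
equicontinuity and equivanishing. Conversely, replacing `g` by its averages over the cubes of a
grid of mesh `δ` costs at most `2 ^ N` times the largest `‖g (· + y) - g‖²` with all `|yᵢ| < δ`
(Jensen on each cube, then Tonelli), and discarding the cubes that miss a compact set `K` costs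
the integral of `‖g‖²` outside `K`. The resulting step functions lie in one finite-dimensional
space, and a bounded set lying uniformly within every `ε` of some finite-dimensional subspace is
totally bounded.
-/

section TotallyBounded

variable {X : Type*}

lemma isCompact_closure_iff_totallyBounded [UniformSpace X] [CompleteSpace X] {s : Set X} :
    IsCompact (closure s) ↔ TotallyBounded s :=
  ⟨fun h => totallyBounded_closure.1 h.totallyBounded,
    fun h => h.closure.isCompact_of_isClosed isClosed_closure⟩

lemma Bornology.IsBounded.totallyBounded_of_forall_exists_finiteDimensional {𝕜 : Type*} [RCLike 𝕜]
    [NormedAddCommGroup X] [NormedSpace 𝕜 X] {s : Set X} (hs : Bornology.IsBounded s)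
    (h : ∀ ε > 0, ∃ V : Submodule 𝕜 X, FiniteDimensional 𝕜 V ∧ ∀ x ∈ s, ∃ v ∈ V, dist x v < ε) :
    TotallyBounded s := by
  obtain ⟨R, hR⟩ := hs.subset_closedBall 0
  refine Metric.totallyBounded_iff.2 fun ε hε => ?_
  obtain ⟨V, hV, hsV⟩ := h (ε / 2) (half_pos hε)
  have hB : IsCompact (((↑) : V → X) '' Metric.closedBall 0 (R + ε / 2)) :=
    (isCompact_closedBall _ _).image continuous_subtype_val
  obtain ⟨t, ht, hBt⟩ := Metric.totallyBounded_iff.1 hB.totallyBounded (ε / 2) (half_pos hε)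
  refine ⟨t, ht, fun x hx => ?_⟩
  obtain ⟨v, hvV, hxv⟩ := hsV x hx
  have hv : v ∈ ((↑) : V → X) '' Metric.closedBall 0 (R + ε / 2) := by
    refine ⟨⟨v, hvV⟩, ?_, rfl⟩
    rw [mem_closedBall_zero_iff, Submodule.coe_norm]
    calc ‖v‖ ≤ ‖x‖ + dist x v := by rw [dist_comm, dist_eq_norm]; exact norm_le_insert' v x
      _ ≤ R + ε / 2 := add_le_add (mem_closedBall_zero_iff.1 (hR hx)) hxv.le
  obtain ⟨z, hz, hvz⟩ := mem_iUnion₂.1 (hBt hv)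
  refine mem_iUnion₂.2 ⟨z, hz, Metric.mem_ball.2 ?_⟩
  linarith [dist_triangle x v z, Metric.mem_ball.1 hvz]

lemma TotallyBounded.eventually_forall_dist_lt {X Y : Type*} [PseudoMetricSpace X]
    [TopologicalSpace Y] {Φ : Y → X → X} {y₀ : Y} {s : Set X} (hs : TotallyBounded s)
    (hΦ : ∀ y, Isometry (Φ y)) (hcont : ∀ x, ContinuousAt (fun y => Φ y x) y₀) {ε : ℝ}
    (hε : 0 < ε) : ∀ᶠ y in 𝓝 y₀, ∀ x ∈ s, dist (Φ y x) (Φ y₀ x) < ε := by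
  obtain ⟨t, ht, hst⟩ := Metric.totallyBounded_iff.1 hs (ε / 3) (by positivity)
  have hnet : ∀ᶠ y in 𝓝 y₀, ∀ c ∈ t, dist (Φ y c) (Φ y₀ c) < ε / 3 :=
    (eventually_all_finite ht).2 fun c _ =>
      (hcont c).eventually (Metric.ball_mem_nhds _ (by positivity))
  filter_upwards [hnet] with y hy x hx
  obtain ⟨c, hc, hxc⟩ := mem_iUnion₂.1 (hst hx)
  calc dist (Φ y x) (Φ y₀ x)
      ≤ dist (Φ y x) (Φ y c) + dist (Φ y c) (Φ y₀ c) + dist (Φ y₀ c) (Φ y₀ x) :=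
        dist_triangle4 _ _ _ _
    _ < ε / 3 + ε / 3 + ε / 3 := by
      rw [(hΦ y).dist_eq, (hΦ y₀).dist_eq, dist_comm c]
      gcongr
      exacts [Metric.mem_ball.1 hxc, hy c hc, Metric.mem_ball.1 hxc]
    _ = ε := by ring

end TotallyBounded

lemma forall_pos_iff_forall_pos_sqrt {P : ℝ → Prop} : (∀ ε > 0, P ε) ↔ ∀ ε > 0, P √ε :=
  ⟨fun h ε hε => h _ (Real.sqrt_pos.2 hε),
    fun h ε hε => Real.sqrt_sq hε.le ▸ h (ε ^ 2) (by positivity)⟩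

section SquareIntegrals

variable {α F : Type*} [MeasurableSpace α] [NormedAddCommGroup F] {ν : Measure α} {u : α → F}

lemma lintegral_enorm_sq_eq_eLpNorm_sq (u : α → F) :
    ∫⁻ x, ‖u x‖ₑ ^ 2 ∂ν = eLpNorm u 2 ν ^ 2 := by
  simpa using (eLpNorm_nnreal_pow_eq_lintegral (f := u) (μ := ν) (p := 2) two_ne_zero).symm

lemma lintegral_enorm_sq_eq_ofReal_lpNorm_sq (hu : MemLp u 2 ν) :
    ∫⁻ x, ‖u x‖ₑ ^ 2 ∂ν = ENNReal.ofReal (lpNorm u 2 ν ^ 2) := by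
  rw [lintegral_enorm_sq_eq_eLpNorm_sq, ← ofReal_lpNorm hu, ENNReal.ofReal_pow lpNorm_nonneg]

lemma integral_norm_sq_eq_lpNorm_sq (hu : AEStronglyMeasurable u ν) :
    ∫ x, ‖u x‖ ^ 2 ∂ν = lpNorm u 2 ν ^ 2 := by
  rw [lpNorm_eq_integral_norm_rpow_toReal two_ne_zero ENNReal.ofNat_ne_top hu,
    ← Real.rpow_natCast, ← Real.rpow_mul (integral_nonneg fun x => by positivity)]
  norm_num

lemma integral_norm_sq_lt_iff (hu : AEStronglyMeasurable u ν) {ε : ℝ} :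
    ∫ x, ‖u x‖ ^ 2 ∂ν < ε ↔ lpNorm u 2 ν < √ε := by
  rw [integral_norm_sq_eq_lpNorm_sq hu, Real.lt_sqrt lpNorm_nonneg]

lemma lintegral_enorm_sq_le_ofReal_of_lpNorm_lt (hu : MemLp u 2 ν) {t : ℝ} (h : lpNorm u 2 ν < √t) :
    ∫⁻ x, ‖u x‖ₑ ^ 2 ∂ν ≤ ENNReal.ofReal t := by
  rw [lintegral_enorm_sq_eq_ofReal_lpNorm_sq hu]
  exact ENNReal.ofReal_le_ofReal ((Real.lt_sqrt lpNorm_nonneg).1 h).le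

lemma lintegral_enorm_sub_indicator_sq_le {S K : Set α} (hK : MeasurableSet K) (hKS : K ⊆ S)
    {g : α → F} (hg : AEStronglyMeasurable g ν) (a : α → F) :
    ∫⁻ x, ‖g x - S.indicator a x‖ₑ ^ 2 ∂ν
      ≤ ∫⁻ x, ‖g x - a x‖ₑ ^ 2 ∂ν + ∫⁻ x in Kᶜ, ‖g x‖ₑ ^ 2 ∂ν := by
  rw [← lintegral_indicator hK.compl,
    ← lintegral_add_right' _ ((hg.enorm.pow_const 2).indicator hK.compl)]
  refine lintegral_mono fun x => ?_
  by_cases hx : x ∈ S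
  · simp [hx]
  · simp [hx, show x ∈ Kᶜ from fun h => hx (hKS h)]

lemma sq_lintegral_le_measure_univ_mul {f : α → ℝ≥0∞} (hf : AEMeasurable f ν) :
    (∫⁻ x, f x ∂ν) ^ 2 ≤ ν univ * ∫⁻ x, f x ^ 2 ∂ν := by
  have h := ENNReal.lintegral_mul_le_Lp_mul_Lq ν Real.HolderConjugate.two_two
    (f := fun _ => 1) aemeasurable_const hf
  simp only [Pi.mul_apply, one_mul, ENNReal.one_rpow, lintegral_const] at h
  calc (∫⁻ x, f x ∂ν) ^ 2
      ≤ ((ν univ) ^ (1 / 2 : ℝ) * (∫⁻ x, f x ^ (2 : ℝ) ∂ν) ^ (1 / 2 : ℝ)) ^ 2 := by gcongr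
    _ = ν univ * ∫⁻ x, f x ^ 2 ∂ν := by
      rw [mul_pow, ← ENNReal.rpow_natCast, ← ENNReal.rpow_natCast (_ ^ _), ← ENNReal.rpow_mul,
        ← ENNReal.rpow_mul]
      norm_num

lemma enorm_sub_setAverage_sq_le [NormedSpace ℝ F] [CompleteSpace F] {s : Set α}
    (hs₀ : ν s ≠ 0) (hs : ν s ≠ ∞) {g : α → F} (hg : IntegrableOn g s ν) (c : F) :
    ‖c - ⨍ z in s, g z ∂ν‖ₑ ^ 2 ≤ (ν s)⁻¹ * ∫⁻ z in s, ‖c - g z‖ₑ ^ 2 ∂ν := by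
  have hint : ν s * ‖c - ⨍ z in s, g z ∂ν‖ₑ ≤ ∫⁻ z in s, ‖c - g z‖ₑ ∂ν := by
    have : ∫ z in s, (c - g z) ∂ν = ν.real s • (c - ⨍ z in s, g z ∂ν) := by
      rw [integral_sub (integrableOn_const (C := c) hs) hg, setIntegral_const, setAverage_eq,
        smul_sub, smul_inv_smul₀ ((measureReal_ne_zero_iff hs).2 hs₀)]
    calc ν s * ‖c - ⨍ z in s, g z ∂ν‖ₑ = ‖∫ z in s, (c - g z) ∂ν‖ₑ := by
          rw [this, enorm_smul, Real.enorm_of_nonneg measureReal_nonneg, measureReal_def,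
            ENNReal.ofReal_toReal hs]
      _ ≤ ∫⁻ z in s, ‖c - g z‖ₑ ∂ν := enorm_integral_le_lintegral_enorm _
  have hcs := sq_lintegral_le_measure_univ_mul (ν := ν.restrict s) (f := fun z => ‖c - g z‖ₑ)
    ((aestronglyMeasurable_const.sub hg.aestronglyMeasurable).enorm)
  rw [Measure.restrict_apply_univ] at hcs
  rw [← ENNReal.div_eq_inv_mul, ENNReal.le_div_iff_mul_le (.inl hs₀) (.inl hs),
    ← ENNReal.mul_le_mul_iff_left hs₀ hs]
  calc ‖c - ⨍ z in s, g z ∂ν‖ₑ ^ 2 * ν s * ν s = (ν s * ‖c - ⨍ z in s, g z ∂ν‖ₑ) ^ 2 := by ring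
    _ ≤ (∫⁻ z in s, ‖c - g z‖ₑ ∂ν) ^ 2 := by gcongr
    _ ≤ _ := hcs.trans_eq (mul_comm _ _)

end SquareIntegrals

section Conditions

variable {E F : Type*} [NormedAddCommGroup E] [MeasurableSpace E] [NormedAddCommGroup F]
  {p : ℝ≥0∞} {μ : Measure E}

def LpEquicontinuous (G : Set (Lp F p μ)) : Prop :=
  ∀ ε > 0, ∀ᶠ y in 𝓝 (0 : E), ∀ g ∈ G, lpNorm (fun x => g (x + y) - g x) p μ < ε

def LpEquivanishing (G : Set (Lp F p μ)) : Prop :=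
  ∀ ε > 0, ∃ K : Set E, IsCompact K ∧ ∀ g ∈ G, lpNorm g p (μ.restrict Kᶜ) < ε

lemma Lp.memLp_translate_sub [MeasurableAdd E] [μ.IsAddRightInvariant] (g : Lp F p μ) (y : E) :
    MemLp (fun x => g (x + y) - g x) p μ :=
  ((Lp.memLp g).comp_measurePreserving (measurePreserving_add_right μ y)).sub (Lp.memLp g)

lemma DomAddAct.dist_mk_vadd_Lp [MeasurableAdd E] [μ.IsAddLeftInvariant] [μ.IsAddRightInvariant]
    (y : E) (g : Lp F p μ) :
    dist (DomAddAct.mk y +ᵥ g) g = lpNorm (fun x => g (x + y) - g x) p μ := by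
  have h : ⇑(DomAddAct.mk y +ᵥ g) - ⇑g =ᵐ[μ] fun x => g (x + y) - g x := by
    filter_upwards [DomAddAct.vadd_Lp_ae_eq (DomAddAct.mk y) g] with x hx
    rw [Pi.sub_apply, hx, Equiv.symm_apply_apply, vadd_eq_add, add_comm]
  rw [Lp.dist_def, eLpNorm_congr_ae h,
    toReal_eLpNorm (Lp.memLp_translate_sub g y).aestronglyMeasurable]

theorem TotallyBounded.lpEquicontinuous [BorelSpace E] [IsLocallyFiniteMeasure μ]
    [μ.InnerRegularCompactLTTop] [μ.IsAddLeftInvariant] [μ.IsAddRightInvariant]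
    [Fact (1 ≤ p)] [Fact (p ≠ ∞)] {G : Set (Lp F p μ)} (hG : TotallyBounded G) :
    LpEquicontinuous G := by
  intro ε hε
  have hcont (g : Lp F p μ) : Continuous fun y : E => DomAddAct.mk y +ᵥ g :=
    DomAddAct.continuous_mk.vadd continuous_const
  filter_upwards [hG.eventually_forall_dist_lt (y₀ := 0) (fun y => isometry_vadd _ (DomAddAct.mk y))
    (fun g => (hcont g).continuousAt) hε] with y hy g hg
  simpa [DomAddAct.dist_mk_vadd_Lp] using hy g hg

theorem TotallyBounded.lpEquivanishing [NormedSpace ℝ F] [BorelSpace E]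
    [WeaklyLocallyCompactSpace E] [μ.Regular] [Fact (1 ≤ p)] (hp : p ≠ ∞)
    {G : Set (Lp F p μ)} (hG : TotallyBounded G) :
    LpEquivanishing G := by
  intro ε hε
  obtain ⟨t, ht, hGt⟩ := Metric.totallyBounded_iff.1 hG (ε / 2) (half_pos hε)
  choose h hsupp happrox _ hmem using fun c : Lp F p μ =>
    (Lp.memLp c).exists_hasCompactSupport_eLpNorm_sub_le hp
      (ENNReal.ofReal_pos.2 (half_pos hε)).ne'
  set K := ⋃ c ∈ t, tsupport (h c)
  have hK : IsCompact K := ht.isCompact_biUnion fun c _ => hsupp c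
  refine ⟨K, hK, fun g hg => ?_⟩
  obtain ⟨c, hct, hgc⟩ := mem_iUnion₂.1 (hGt hg)
  have hvanish : ⇑g =ᵐ[μ.restrict Kᶜ] ⇑g - h c := by
    refine (ae_restrict_mem hK.isClosed.measurableSet.compl).mono fun x hx => ?_
    have : x ∉ tsupport (h c) := fun hxc => hx (mem_biUnion hct hxc)
    simp [image_eq_zero_of_notMem_tsupport this]
  have : eLpNorm g p (μ.restrict Kᶜ) < ENNReal.ofReal ε :=
    calc eLpNorm g p (μ.restrict Kᶜ)
        = eLpNorm (⇑g - h c) p (μ.restrict Kᶜ) := eLpNorm_congr_ae hvanish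
      _ ≤ eLpNorm (⇑g - h c) p μ := eLpNorm_mono_measure _ Measure.restrict_le_self
      _ ≤ eLpNorm (⇑g - ⇑c) p μ + eLpNorm (⇑c - h c) p μ := by
        rw [← sub_add_sub_cancel (⇑g) (⇑c) (h c)]
        exact eLpNorm_add_le ((Lp.aestronglyMeasurable g).sub (Lp.aestronglyMeasurable c))
          ((Lp.aestronglyMeasurable c).sub (hmem c).1) Fact.out
      _ < ENNReal.ofReal (ε / 2) + ENNReal.ofReal (ε / 2) := by
        rw [← Lp.edist_def]
        exact ENNReal.add_lt_add_of_lt_of_le ((happrox c).trans_lt ENNReal.ofReal_lt_top).ne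
          (edist_lt_ofReal.2 (Metric.mem_ball.1 hgc)) (happrox c)
      _ = ENNReal.ofReal ε := by
        rw [← ENNReal.ofReal_add (by positivity) (by positivity), add_halves]
  rw [← toReal_eLpNorm (Lp.aestronglyMeasurable g).restrict]
  exact ENNReal.toReal_lt_of_lt_ofReal this

lemma lpEquicontinuous_iff_integral [MeasurableAdd E] [μ.IsAddRightInvariant]
    {G : Set (Lp F 2 μ)} :
    LpEquicontinuous G ↔ ∀ ε > 0, ∃ U : Set E, IsOpen U ∧ 0 ∈ U ∧
      ∀ y ∈ U, ∀ g ∈ G, ∫ x, ‖g (x + y) - g x‖ ^ 2 ∂μ < ε := by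
  rw [LpEquicontinuous, forall_pos_iff_forall_pos_sqrt]
  simp only [integral_norm_sq_lt_iff (Lp.memLp_translate_sub _ _).aestronglyMeasurable,
    eventually_nhds_iff]
  exact forall₂_congr fun ε _ => exists_congr fun U => by tauto

lemma lpEquivanishing_iff_integral {G : Set (Lp F 2 μ)} :
    LpEquivanishing G ↔
      ∀ ε > 0, ∃ K : Set E, IsCompact K ∧ ∀ g ∈ G, ∫ x in Kᶜ, ‖g x‖ ^ 2 ∂μ < ε := by
  rw [LpEquivanishing, forall_pos_iff_forall_pos_sqrt]
  simp only [integral_norm_sq_lt_iff (Lp.aestronglyMeasurable _).restrict]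

lemma LpEquivanishing.exists_isCompact_lintegral_compl_le {G : Set (Lp F 2 μ)}
    (h : LpEquivanishing G) {t : ℝ} (ht : 0 < t) :
    ∃ K : Set E, IsCompact K ∧ ∀ g ∈ G, ∫⁻ x in Kᶜ, ‖g x‖ₑ ^ 2 ∂μ ≤ ENNReal.ofReal t := by
  obtain ⟨K, hK, hKG⟩ := h √t (Real.sqrt_pos.2 ht)
  exact ⟨K, hK, fun g hg =>
    lintegral_enorm_sq_le_ofReal_of_lpNorm_lt ((Lp.memLp g).restrict _) (hKG g hg)⟩

end Conditions

section Cubes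

variable {ι : Type*} {δ : ℝ}

section EuclideanSpace

variable [Fintype ι]

lemma EuclideanSpace.volume_setOf_forall_mem (s : ι → Set ℝ) :
    volume {x : EuclideanSpace ℝ ι | ∀ i, x i ∈ s i} = ∏ i, volume (s i) := by
  rw [← volume_pi_pi,
    ← (EuclideanSpace.volume_preserving_symm_measurableEquiv_toLp ι).measure_preimage_equiv]
  congr 1
  ext x
  simp [Set.mem_pi]

lemma EuclideanSpace.norm_le_sqrt_card_mul {y : EuclideanSpace ℝ ι} (hδ : 0 ≤ δ)
    (hy : ∀ i, |y i| ≤ δ) : ‖y‖ ≤ √(Fintype.card ι) * δ := by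
  rw [EuclideanSpace.norm_eq, ← Real.sqrt_sq hδ, ← Real.sqrt_mul (Nat.cast_nonneg _)]
  gcongr
  calc ∑ i, ‖y i‖ ^ 2 ≤ ∑ _ : ι, δ ^ 2 := by
        gcongr with i
        exact hy i
    _ = _ := by simp

lemma volume_setOf_forall_abs_lt (δ : ℝ) :
    volume {y : EuclideanSpace ℝ ι | ∀ i, |y i| < δ}
      = ENNReal.ofReal (2 * δ) ^ Fintype.card ι := by
  simp_rw [abs_lt, ← mem_Ioo, EuclideanSpace.volume_setOf_forall_mem, Real.volume_Ioo]
  simp [two_mul]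

lemma measurableSet_setOf_forall_abs_lt (δ : ℝ) :
    MeasurableSet {y : EuclideanSpace ℝ ι | ∀ i, |y i| < δ} := by
  simp only [ofPred_forall]
  exact MeasurableSet.iInter fun i => measurableSet_lt (by fun_prop) measurable_const

end EuclideanSpace

noncomputable def cubeIndex (δ : ℝ) (x : EuclideanSpace ℝ ι) : ι → ℤ := fun i => ⌊x i / δ⌋

def cube (δ : ℝ) (k : ι → ℤ) : Set (EuclideanSpace ℝ ι) := cubeIndex δ ⁻¹' {k}

lemma cube_eq_setOf_mem_Ico (hδ : 0 < δ) (k : ι → ℤ) :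
    cube δ k = {x | ∀ i, x i ∈ Ico (k i * δ) ((k i + 1) * δ)} := by
  ext x
  simp only [cube, cubeIndex, mem_preimage, mem_singleton_iff, funext_iff, Int.floor_eq_iff,
    le_div_iff₀ hδ, div_lt_iff₀ hδ, mem_ofPred_eq, mem_Ico]

lemma abs_sub_lt_of_cubeIndex_eq (hδ : 0 < δ) {x z : EuclideanSpace ℝ ι}
    (h : cubeIndex δ x = cubeIndex δ z) (i : ι) : |x i - z i| < δ := by
  have := Int.abs_sub_lt_one_of_floor_eq_floor (congrFun h i)
  rwa [← sub_div, abs_div, abs_of_pos hδ, div_lt_one hδ] at this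

lemma measurable_cubeIndex : Measurable (cubeIndex (ι := ι) δ) :=
  measurable_pi_lambda _ fun i => Int.measurable_floor.comp (by fun_prop)

variable [Fintype ι]

lemma measurableSet_cube (k : ι → ℤ) : MeasurableSet (cube δ k) :=
  measurable_cubeIndex (measurableSet_singleton k)

lemma volume_cube (hδ : 0 < δ) (k : ι → ℤ) :
    volume (cube δ k) = ENNReal.ofReal δ ^ Fintype.card ι := by
  rw [cube_eq_setOf_mem_Ico hδ, EuclideanSpace.volume_setOf_forall_mem]
  simp [add_mul]

lemma volume_cube_ne_top (hδ : 0 < δ) (k : ι → ℤ) : volume (cube δ k) ≠ ∞ := by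
  rw [volume_cube hδ]
  exact ENNReal.pow_ne_top ENNReal.ofReal_ne_top

lemma finite_cubeIndex_image (hδ : 0 < δ) {K : Set (EuclideanSpace ℝ ι)}
    (hK : Bornology.IsBounded K) : (cubeIndex δ '' K).Finite := by
  obtain ⟨R, hR⟩ := hK.subset_closedBall 0
  refine (Set.Finite.pi (t := fun _ => Icc ⌊-R / δ⌋ ⌊R / δ⌋) fun _ => finite_Icc _ _).subset ?_
  rintro _ ⟨x, hx, rfl⟩ i -
  have hxi : |x i| ≤ R := (PiLp.norm_apply_le x i).trans (mem_closedBall_zero_iff.1 (hR hx))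
  exact ⟨Int.floor_mono (div_le_div_of_nonneg_right (neg_le_of_abs_le hxi) hδ.le),
    Int.floor_mono (div_le_div_of_nonneg_right (le_of_abs_le hxi) hδ.le)⟩

section Average

variable {F : Type*} [NormedAddCommGroup F] [NormedSpace ℝ F]

noncomputable def cubeAverage (δ : ℝ) (g : EuclideanSpace ℝ ι → F) (x : EuclideanSpace ℝ ι) :
    F :=
  ⨍ z in cube δ (cubeIndex δ x), g z

variable [CompleteSpace F] {g : EuclideanSpace ℝ ι → F}

lemma enorm_sub_cubeAverage_sq_le (hδ : 0 < δ) (hg : MemLp g 2 volume)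
    (x : EuclideanSpace ℝ ι) :
    ‖g x - cubeAverage δ g x‖ₑ ^ 2 ≤ (ENNReal.ofReal δ ^ Fintype.card ι)⁻¹ *
      ∫⁻ y in {y | ∀ i, |y i| < δ}, ‖g (x + y) - g x‖ₑ ^ 2 := by
  set Q := cube δ (cubeIndex δ x)
  have hQ : volume Q = ENNReal.ofReal δ ^ Fintype.card ι := volume_cube hδ _
  have : IsFiniteMeasure (volume.restrict Q) :=
    isFiniteMeasure_restrict.2 (volume_cube_ne_top hδ _)
  have hshift : ∫⁻ z in Q, ‖g x - g z‖ₑ ^ 2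
      ≤ ∫⁻ y in {y | ∀ i, |y i| < δ}, ‖g (x + y) - g x‖ₑ ^ 2 := by
    calc ∫⁻ z in Q, ‖g x - g z‖ₑ ^ 2
        = ∫⁻ y in (x + ·) ⁻¹' Q, ‖g x - g (x + y)‖ₑ ^ 2 :=
          ((measurePreserving_add_left volume x).setLIntegral_comp_preimage_emb
            (measurableEmbedding_addLeft x) (fun z => ‖g x - g z‖ₑ ^ 2) Q).symm
      _ ≤ ∫⁻ y in {y | ∀ i, |y i| < δ}, ‖g x - g (x + y)‖ₑ ^ 2 :=
          lintegral_mono_set fun y hy i => by simpa using abs_sub_lt_of_cubeIndex_eq hδ hy i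
      _ = _ := by simp_rw [enorm_sub_rev]
  calc ‖g x - cubeAverage δ g x‖ₑ ^ 2 ≤ (volume Q)⁻¹ * ∫⁻ z in Q, ‖g x - g z‖ₑ ^ 2 :=
        enorm_sub_setAverage_sq_le (hQ ▸ pow_ne_zero _ (ENNReal.ofReal_pos.2 hδ).ne')
          (volume_cube_ne_top hδ _) ((hg.restrict Q).integrable one_le_two) _
    _ ≤ _ := by rw [hQ]; gcongr

lemma lintegral_enorm_sub_cubeAverage_sq_le (hδ : 0 < δ) (hg : MemLp g 2 volume) {η : ℝ≥0∞}
    (hη : ∀ y : EuclideanSpace ℝ ι, (∀ i, |y i| < δ) → ∫⁻ x, ‖g (x + y) - g x‖ₑ ^ 2 ≤ η) :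
    ∫⁻ x, ‖g x - cubeAverage δ g x‖ₑ ^ 2 ≤ 2 ^ Fintype.card ι * η := by
  set A := ENNReal.ofReal δ ^ Fintype.card ι
  set B := {y : EuclideanSpace ℝ ι | ∀ i, |y i| < δ}
  have hA₀ : A ≠ 0 := pow_ne_zero _ (ENNReal.ofReal_pos.2 hδ).ne'
  have hA : A ≠ ∞ := ENNReal.pow_ne_top ENNReal.ofReal_ne_top
  have hB : volume B = 2 ^ Fintype.card ι * A := by
    rw [volume_setOf_forall_abs_lt, ENNReal.ofReal_mul zero_le_two, mul_pow, ENNReal.ofReal_ofNat]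
  have hmeas : AEMeasurable (fun p : EuclideanSpace ℝ ι × EuclideanSpace ℝ ι =>
      ‖g (p.1 + p.2) - g p.1‖ₑ ^ 2) (volume.prod (volume.restrict B)) := by
    have hac : (volume : Measure (EuclideanSpace ℝ ι)).prod (volume.restrict B) ≪
        (volume : Measure (EuclideanSpace ℝ ι)).prod volume :=
      Measure.AbsolutelyContinuous.rfl.prod
        (Measure.absolutelyContinuous_of_le Measure.restrict_le_self)
    exact (((hg.1.comp_quasiMeasurePreserving (quasiMeasurePreserving_add volume volume)).sub
      hg.1.comp_fst).mono_ac hac).enorm.pow_const 2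
  calc ∫⁻ x, ‖g x - cubeAverage δ g x‖ₑ ^ 2
      ≤ ∫⁻ x, A⁻¹ * ∫⁻ y in B, ‖g (x + y) - g x‖ₑ ^ 2 :=
        lintegral_mono (enorm_sub_cubeAverage_sq_le hδ hg)
    _ = A⁻¹ * ∫⁻ y in B, ∫⁻ x, ‖g (x + y) - g x‖ₑ ^ 2 := by
      rw [lintegral_const_mul' _ _ (ENNReal.inv_ne_top.2 hA₀), lintegral_lintegral_swap hmeas]
    _ ≤ A⁻¹ * ∫⁻ _ in B, η :=
      mul_le_mul_right (setLIntegral_mono' (measurableSet_setOf_forall_abs_lt δ) hη) _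
    _ = 2 ^ Fintype.card ι * η * (A⁻¹ * A) := by rw [setLIntegral_const, hB]; ring
    _ = 2 ^ Fintype.card ι * η := by rw [ENNReal.inv_mul_cancel hA₀ hA, mul_one]

end Average

variable (𝕜 : Type*) [RCLike 𝕜]

noncomputable def cubeIndicator (hδ : 0 < δ) (k : ι → ℤ) :
    Lp 𝕜 2 (volume : Measure (EuclideanSpace ℝ ι)) :=
  indicatorConstLp 2 (measurableSet_cube k) (volume_cube_ne_top hδ k) 1

variable {𝕜}

lemma coeFn_cubeIndicator (hδ : 0 < δ) (k : ι → ℤ) :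
    ⇑(cubeIndicator 𝕜 hδ k) =ᵐ[volume] (cube δ k).indicator fun _ => (1 : 𝕜) :=
  indicatorConstLp_coeFn

lemma coeFn_sum_smul_cubeIndicator (hδ : 0 < δ) (I : Finset (ι → ℤ)) (c : (ι → ℤ) → 𝕜) :
    ⇑(∑ k ∈ I, c k • cubeIndicator 𝕜 hδ k)
      =ᵐ[volume] (cubeIndex δ ⁻¹' I).indicator fun x => c (cubeIndex δ x) := by
  classical
  have hterm : ∀ᵐ x, ∀ k ∈ I,
      (c k • cubeIndicator 𝕜 hδ k) x = if cubeIndex δ x = k then c k else 0 := by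
    refine I.eventually_all.2 fun k _ => ?_
    filter_upwards [Lp.coeFn_smul (c k) (cubeIndicator 𝕜 hδ k),
      coeFn_cubeIndicator (𝕜 := 𝕜) hδ k] with x h1 h2
    simp [h1, h2, indicator_apply, cube]
  filter_upwards [Lp.coeFn_fun_finsetSum I fun k => c k • cubeIndicator 𝕜 hδ k, hterm]
    with x h1 h2
  rw [h1, Finset.sum_congr rfl h2, Finset.sum_ite_eq]
  simp [indicator_apply]

lemma eLpNorm_sub_sum_smul_cubeIndicator_sq_le (hδ : 0 < δ)
    (g : Lp 𝕜 2 (volume : Measure (EuclideanSpace ℝ ι))) {K : Set (EuclideanSpace ℝ ι)}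
    (hK : MeasurableSet K) {I : Finset (ι → ℤ)} (hKI : K ⊆ cubeIndex δ ⁻¹' I) :
    eLpNorm ⇑(g - ∑ k ∈ I, (⨍ z in cube δ k, g z) • cubeIndicator 𝕜 hδ k) 2 volume ^ 2
      ≤ (∫⁻ x, ‖g x - cubeAverage δ g x‖ₑ ^ 2) + ∫⁻ x in Kᶜ, ‖g x‖ₑ ^ 2 := by
  rw [← lintegral_enorm_sq_eq_eLpNorm_sq]
  calc ∫⁻ x, ‖(g - ∑ k ∈ I, (⨍ z in cube δ k, g z) • cubeIndicator 𝕜 hδ k) x‖ₑ ^ 2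
      = ∫⁻ x, ‖g x - (cubeIndex δ ⁻¹' I).indicator (cubeAverage δ g) x‖ₑ ^ 2 := by
        refine lintegral_congr_ae ?_
        filter_upwards [Lp.coeFn_sub g (∑ k ∈ I, (⨍ z in cube δ k, g z) • cubeIndicator 𝕜 hδ k),
          coeFn_sum_smul_cubeIndicator hδ I fun k => ⨍ z in cube δ k, g z] with x h1 h2
        rw [h1, Pi.sub_apply, h2]
        rfl
    _ ≤ _ := lintegral_enorm_sub_indicator_sq_le hK hKI (Lp.aestronglyMeasurable g) _

end Cubes

section KolmogorovRiesz

variable {ι 𝕜 : Type*} [Fintype ι] [RCLike 𝕜]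

lemma LpEquicontinuous.exists_pos_forall_abs_lt {F : Type*} [NormedAddCommGroup F]
    {G : Set (Lp F 2 (volume : Measure (EuclideanSpace ℝ ι)))} (h : LpEquicontinuous G) {t : ℝ}
    (ht : 0 < t) : ∃ δ > 0, ∀ g ∈ G, ∀ y : EuclideanSpace ℝ ι, (∀ i, |y i| < δ) →
      ∫⁻ x, ‖g (x + y) - g x‖ₑ ^ 2 ≤ ENNReal.ofReal t := by
  obtain ⟨r, hr, hU⟩ := Metric.eventually_nhds_iff.1 (h √t (Real.sqrt_pos.2 ht))
  refine ⟨r / (√(Fintype.card ι) + 1), by positivity, fun g hg y hy =>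
    lintegral_enorm_sq_le_ofReal_of_lpNorm_lt (Lp.memLp_translate_sub g y) (hU ?_ g hg)⟩
  calc dist y 0 = ‖y‖ := dist_zero_right y
    _ ≤ √(Fintype.card ι) * (r / (√(Fintype.card ι) + 1)) :=
      EuclideanSpace.norm_le_sqrt_card_mul (by positivity) fun i => (hy i).le
    _ < r := by
      rw [← mul_div_assoc, div_lt_iff₀ (by positivity)]
      linarith

theorem totallyBounded_of_lpEquicontinuous_of_lpEquivanishing
    {G : Set (Lp 𝕜 2 (volume : Measure (EuclideanSpace ℝ ι)))} (hb : Bornology.IsBounded G)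
    (h₁ : LpEquicontinuous G) (h₂ : LpEquivanishing G) : TotallyBounded G := by
  refine hb.totallyBounded_of_forall_exists_finiteDimensional (𝕜 := 𝕜) fun ε hε => ?_
  set n := Fintype.card ι
  set a := ε ^ 2 / 4
  have ha : 0 < a := by positivity
  obtain ⟨δ, hδ, hshift⟩ := h₁.exists_pos_forall_abs_lt (t := a / 2 ^ n) (by positivity)
  obtain ⟨K, hK, htail⟩ := h₂.exists_isCompact_lintegral_compl_le ha
  have hI := finite_cubeIndex_image hδ hK.isBounded
  refine ⟨Submodule.span 𝕜 (cubeIndicator 𝕜 hδ '' hI.toFinset),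
    FiniteDimensional.span_of_finite 𝕜 (hI.toFinset.finite_toSet.image _), fun g hg =>
    ⟨∑ k ∈ hI.toFinset, (⨍ z in cube δ k, g z) • cubeIndicator 𝕜 hδ k,
      Submodule.sum_mem _ fun k hk => Submodule.smul_mem _ _ (Submodule.subset_span ⟨k, hk, rfl⟩),
      ?_⟩⟩
  have hKI : K ⊆ cubeIndex δ ⁻¹' hI.toFinset := fun x hx => by simpa using ⟨x, hx, rfl⟩
  have hsq := (eLpNorm_sub_sum_smul_cubeIndicator_sq_le hδ g hK.isClosed.measurableSet hKI).trans
    (add_le_add (lintegral_enorm_sub_cubeAverage_sq_le hδ (Lp.memLp g) (hshift g hg))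
      (htail g hg))
  have hbound : (2 : ℝ≥0∞) ^ n * ENNReal.ofReal (a / 2 ^ n) + ENNReal.ofReal a
      < ENNReal.ofReal ε ^ 2 := by
    rw [← ENNReal.ofReal_ofNat 2, ← ENNReal.ofReal_pow zero_le_two,
      ← ENNReal.ofReal_mul (by positivity), mul_div_cancel₀ _ (by positivity),
      ← ENNReal.ofReal_add ha.le ha.le, ← ENNReal.ofReal_pow hε.le,
      ENNReal.ofReal_lt_ofReal_iff (by positivity)]
    have : 0 < ε ^ 2 := by positivity
    simp only [a]
    linarith
  rw [dist_eq_norm, Lp.norm_def]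
  exact ENNReal.toReal_lt_of_lt_ofReal
    ((ENNReal.pow_lt_pow_left_iff two_ne_zero).1 (hsq.trans_lt hbound))

theorem totallyBounded_iff_lpEquicontinuous_and_lpEquivanishing
    {G : Set (Lp 𝕜 2 (volume : Measure (EuclideanSpace ℝ ι)))} (hb : Bornology.IsBounded G) :
    TotallyBounded G ↔ LpEquicontinuous G ∧ LpEquivanishing G := by
  have : Fact ((2 : ℝ≥0∞) ≠ ∞) := ⟨ENNReal.ofNat_ne_top⟩
  exact ⟨fun h => ⟨h.lpEquicontinuous, h.lpEquivanishing ENNReal.ofNat_ne_top⟩,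
    fun h => totallyBounded_of_lpEquicontinuous_of_lpEquivanishing hb h.1 h.2⟩

end KolmogorovRiesz

theorem pego_classical_general {N : ℕ}
    (T : Lp ℂ 2 (volume : Measure (EuclideanSpace ℝ (Fin N))) →ₗᵢ[ℂ]
      Lp ℂ 2 (volume : Measure (EuclideanSpace ℝ (Fin N))))
    (F : Set (Lp ℂ 2 (volume : Measure (EuclideanSpace ℝ (Fin N)))))
    (hbdd : ∃ M : ℝ, ∀ f ∈ F, ‖f‖ ≤ M) :
    IsCompact (closure F) ↔
      ((∀ ε > (0 : ℝ), ∃ U : Set (EuclideanSpace ℝ (Fin N)), IsOpen U ∧ (0 : _) ∈ U ∧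
          ∀ y ∈ U, ∀ f ∈ F,
            (∫ x, ‖(T f : EuclideanSpace ℝ (Fin N) → ℂ) (x + y) -
              (T f : EuclideanSpace ℝ (Fin N) → ℂ) x‖ ^ 2 ∂volume) < ε) ∧
        (∀ ε > (0 : ℝ), ∃ K : Set (EuclideanSpace ℝ (Fin N)), IsCompact K ∧
          ∀ f ∈ F, (∫ x in Kᶜ, ‖(T f : EuclideanSpace ℝ (Fin N) → ℂ) x‖ ^ 2 ∂volume) < ε)) := by
  obtain ⟨M, hM⟩ := hbdd
  have hb : Bornology.IsBounded (T '' F) := isBounded_iff_forall_norm_le.2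
    ⟨M, by rintro _ ⟨f, hf, rfl⟩; rw [T.norm_map]; exact hM f hf⟩
  rw [isCompact_closure_iff_totallyBounded, ← totallyBounded_image_iff T.isometry.isUniformInducing,
    totallyBounded_iff_lpEquicontinuous_and_lpEquivanishing hb, lpEquicontinuous_iff_integral,
    lpEquivanishing_iff_integral]
  simp only [forall_mem_image]

/-- **Classical Pego theorem.** A bounded family `F ⊆ L²(ℝ^N)` is relatively compact if and
only if the family of (Plancherel) Fourier transforms `F̂` is `L²`-equicontinuous and
`L²`-equivanishing.  Here `T` is the Fourier–Plancherel transform, i.e. the linear isometry on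
`L²(ℝ^N)` which agrees with the Fourier integral `𝓕 f` on `L¹ ∩ L²`. -/
theorem pego_classical {N : ℕ}
    (T : Lp ℂ 2 (volume : Measure (EuclideanSpace ℝ (Fin N))) →ₗᵢ[ℂ]
      Lp ℂ 2 (volume : Measure (EuclideanSpace ℝ (Fin N))))
    (hT : ∀ (f : EuclideanSpace ℝ (Fin N) → ℂ) (hf1 : Integrable f volume)
      (hf2 : MemLp f 2 volume), (T (hf2.toLp f) : EuclideanSpace ℝ (Fin N) → ℂ) =ᵐ[volume] 𝓕 f)
    (F : Set (Lp ℂ 2 (volume : Measure (EuclideanSpace ℝ (Fin N)))))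
    (hbdd : ∃ M : ℝ, ∀ f ∈ F, ‖f‖ ≤ M) :
    IsCompact (closure F) ↔
      ((∀ ε > (0 : ℝ), ∃ U : Set (EuclideanSpace ℝ (Fin N)), IsOpen U ∧ (0 : _) ∈ U ∧
          ∀ y ∈ U, ∀ f ∈ F,
            (∫ x, ‖(T f : EuclideanSpace ℝ (Fin N) → ℂ) (x + y) -
              (T f : EuclideanSpace ℝ (Fin N) → ℂ) x‖ ^ 2 ∂volume) < ε) ∧
        (∀ ε > (0 : ℝ), ∃ K : Set (EuclideanSpace ℝ (Fin N)), IsCompact K ∧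
          ∀ f ∈ F, (∫ x in Kᶜ, ‖(T f : EuclideanSpace ℝ (Fin N) → ℂ) x‖ ^ 2 ∂volume) < ε)) :=
  pego_classical_general T F hbdd
end

section
/- Let f ∈ ℓ¹(ℤ) = L¹(ℤ) (ℤ with counting measure) and let Ψ_f : ℓ²(ℤ) → ℓ²(ℤ) be the convolution operator Ψ_f(φ)(x) = Σ_{y∈ℤ} f(x−y)·φ(y). Then the operator norm of Ψ_f equals the supremum norm of the Fourier transform of f: ‖Ψ_f‖ = sup_{α∈[0,1)} |Σ_{n∈ℤ} f(n)·e^{−2πinα}|. -/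
open Real Complex
open scoped ENNReal

/-!
The Fourier basis `eₙ(x) = e^{2πinx}` is a unitary `L²(ℝ/ℤ) ≃ ℓ²(ℤ)` that conjugates `Ψ_f` into
multiplication by the continuous function `g = ∑ f(n) eₙ`, because the Fourier coefficients of
`g · h` are the convolution of `f` with those of `h`. Multiplication by a continuous `g` on a
compact space whose measure charges every nonempty open set has operator norm `‖g‖_∞`: for
`c < ‖g‖_∞` test it on the indicator of the open set `{|g| > c}`. Finally `f̂(α) = g(-α)`.
-/

open MeasureTheory

namespace ContinuousMap

variable {X : Type*} [TopologicalSpace X] [CompactSpace X] [MeasurableSpace X]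
  [BorelSpace X] (μ : Measure X) [IsFiniteMeasure μ]

noncomputable def mulL2 (g : C(X, ℂ)) : Lp ℂ 2 μ →L[ℂ] Lp ℂ 2 μ :=
  (ContinuousLinearMap.mul ℂ ℂ).holderL μ ∞ 2 2 (toLp ∞ μ ℂ g)

variable {μ}

theorem coeFn_mulL2 (g : C(X, ℂ)) (h : Lp ℂ 2 μ) : mulL2 μ g h =ᵐ[μ] fun x => g x * h x := by
  filter_upwards [(ContinuousLinearMap.mul ℂ ℂ).coeFn_holder (r := 2) (toLp ∞ μ ℂ g) h,
    coeFn_toLp (p := ∞) (𝕜 := ℂ) μ g] with x hx hg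
  rw [mulL2, ContinuousLinearMap.holderL_apply_apply, hx, hg]
  rfl

theorem norm_mulL2_apply_le (g : C(X, ℂ)) (h : Lp ℂ 2 μ) : ‖mulL2 μ g h‖ ≤ ‖g‖ * ‖h‖ := by
  rw [← norm_norm g, ← norm_smul (‖g‖ : ℝ) h]
  refine Lp.norm_le_norm_of_ae_le ?_
  filter_upwards [coeFn_mulL2 g h, Lp.coeFn_smul ‖g‖ h] with x hx hs
  rw [hx, hs, Pi.smul_apply, norm_mul, norm_smul, norm_norm]
  exact mul_le_mul_of_nonneg_right (g.norm_coe_le_norm x) (norm_nonneg _)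

theorem mul_norm_le_norm_mulL2_indicatorConstLp (g : C(X, ℂ)) {S : Set X} (hS : MeasurableSet S)
    (hμS : μ S ≠ ∞) {c : ℝ} (hc : 0 ≤ c) (hcS : ∀ x ∈ S, c ≤ ‖g x‖) :
    c * ‖indicatorConstLp 2 hS hμS (1 : ℂ)‖ ≤ ‖mulL2 μ g (indicatorConstLp 2 hS hμS (1 : ℂ))‖ := by
  rw [← abs_of_nonneg hc, ← Real.norm_eq_abs, ← norm_smul]
  refine Lp.norm_le_norm_of_ae_le ?_
  filter_upwards [coeFn_mulL2 g (indicatorConstLp 2 hS hμS (1 : ℂ)),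
    Lp.coeFn_smul c (indicatorConstLp 2 hS hμS (1 : ℂ)),
    indicatorConstLp_coeFn (p := 2) (hs := hS) (hμs := hμS) (c := (1 : ℂ))] with x hx hs hi
  rw [hx, hs, Pi.smul_apply, hi, norm_mul, norm_smul]
  by_cases hxS : x ∈ S
  · simp only [Set.indicator_of_mem hxS]
    exact mul_le_mul_of_nonneg_right (by simpa [abs_of_nonneg hc] using hcS x hxS) (norm_nonneg _)
  · simp [Set.indicator_of_notMem hxS]

theorem norm_mulL2 [μ.IsOpenPosMeasure] (g : C(X, ℂ)) : ‖mulL2 μ g‖ = ‖g‖ := by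
  refine le_antisymm
    (ContinuousLinearMap.opNorm_le_bound _ (norm_nonneg g) (norm_mulL2_apply_le g)) ?_
  refine le_of_forall_lt_imp_le_of_dense fun c hc => ?_
  rcases lt_or_ge c 0 with hc0 | hc0
  · exact hc0.le.trans (norm_nonneg _)
  obtain ⟨x, hx⟩ : ∃ x, c < ‖g x‖ := by
    by_contra! h
    exact hc.not_ge ((g.norm_le hc0).mpr h)
  have hS : IsOpen {x | c < ‖g x‖} := isOpen_lt continuous_const (by fun_prop)
  have hμS : μ {x | c < ‖g x‖} ≠ ∞ := measure_ne_top _ _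
  set h := indicatorConstLp 2 hS.measurableSet hμS (1 : ℂ)
  have hh : 0 < ‖h‖ := by
    rw [norm_indicatorConstLp two_ne_zero ENNReal.ofNat_ne_top, norm_one, one_mul]
    exact Real.rpow_pos_of_pos (ENNReal.toReal_pos (hS.measure_ne_zero μ ⟨x, hx⟩) hμS) _
  refine le_of_mul_le_mul_right ?_ hh
  calc c * ‖h‖ ≤ ‖mulL2 μ g h‖ :=
        mul_norm_le_norm_mulL2_indicatorConstLp g _ hμS hc0 fun _ hy => le_of_lt hy
    _ ≤ ‖mulL2 μ g‖ * ‖h‖ := (mulL2 μ g).le_opNorm h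

end ContinuousMap

namespace AddCircle

variable {T : ℝ} [Fact (0 < T)]

noncomputable def fourierSeries (f : ℤ → ℂ) : C(AddCircle T, ℂ) := ∑' n, f n • fourier n

variable {f : ℤ → ℂ}

theorem fourierSeries_apply (hf : Summable fun n => ‖f n‖) (x : AddCircle T) :
    fourierSeries f x = ∑' n, f n * fourier n x := by
  have hsum : Summable fun n => f n • fourier (T := T) n :=
    .of_norm <| by simpa only [norm_smul, fourier_norm, mul_one] using hf
  exact (ContinuousMap.evalCLM ℂ x).map_tsum hsum

theorem fourierCoeff_fourierSeries_mul (hf : Summable fun n => ‖f n‖) {h : AddCircle T → ℂ}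
    (hh : Integrable h haarAddCircle) (n : ℤ) :
    fourierCoeff (fun x => fourierSeries f x * h x) n = ∑' m, f m * fourierCoeff h (n - m) := by
  have hterm : ∀ x, fourier (-n) x • (fourierSeries f x * h x)
      = ∑' m, f m * (fourier (-(n - m)) x • h x) := by
    intro x
    rw [fourierSeries_apply hf, smul_eq_mul, ← tsum_mul_right, ← tsum_mul_left]
    refine tsum_congr fun m => ?_
    rw [neg_sub, sub_eq_add_neg, fourier_add, smul_eq_mul]
    ring
  have hnorm : ∀ m x, ‖f m * (fourier (-(n - m)) x • h x)‖ = ‖f m‖ * ‖h x‖ := fun m x => by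
    simp [Circle.norm_coe]
  have hint : ∀ m, Integrable (fun x => f m * (fourier (-(n - m)) x • h x)) haarAddCircle :=
    fun m => (hh.fourier_smul _).const_mul (f m)
  have hsum : Summable fun m => ∫ x, ‖f m * (fourier (-(n - m)) x • h x)‖ ∂haarAddCircle := by
    simpa only [hnorm, integral_const_mul] using hf.mul_right (∫ x, ‖h x‖ ∂haarAddCircle)
  calc fourierCoeff (fun x => fourierSeries f x * h x) n
      = ∫ x, ∑' m, f m * (fourier (-(n - m)) x • h x) ∂haarAddCircle :=
        integral_congr_ae (.of_forall hterm)
    _ = ∑' m, ∫ x, f m * (fourier (-(n - m)) x • h x) ∂haarAddCircle :=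
        (integral_tsum_of_summable_integral_norm hint hsum).symm
    _ = ∑' m, f m * fourierCoeff h (n - m) := by
        simp only [integral_const_mul, fourierCoeff]

theorem fourierBasis_repr_mulL2_fourierSeries (hf : Summable fun n => ‖f n‖)
    (h : Lp ℂ 2 (haarAddCircle (T := T))) (n : ℤ) :
    fourierBasis.repr (ContinuousMap.mulL2 haarAddCircle (fourierSeries f) h) n
      = ∑' m, f (n - m) * fourierBasis.repr h m := by
  have hcoeff : fourierCoeff (ContinuousMap.mulL2 haarAddCircle (fourierSeries f) h) n
      = fourierCoeff (fun x => fourierSeries f x * h x) n :=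
    integral_congr_ae <| by
      filter_upwards [ContinuousMap.coeFn_mulL2 (fourierSeries f) h] with x hx
      rw [hx]
  rw [fourierBasis_repr, hcoeff,
    fourierCoeff_fourierSeries_mul hf ((Lp.memLp h).integrable one_le_two),
    ← (Equiv.subLeft n).tsum_eq]
  simp only [Equiv.subLeft_apply, sub_sub_cancel, fourierBasis_repr]

theorem iSup_neg_coe_Ico (F : AddCircle T → ℝ) :
    ⨆ α : Set.Ico 0 T, F (-((α : ℝ) : AddCircle T)) = ⨆ x, F x := by
  refine Function.Surjective.iSup_comp (fun x => ?_) F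
  refine ⟨⟨equivIco T 0 (-x), by simpa using (equivIco T 0 (-x)).2⟩, ?_⟩
  simp [coe_equivIco]

end AddCircle

open AddCircle in
/-- For `f ∈ ℓ¹(ℤ)`, the convolution operator `Ψ_f : ℓ²(ℤ) → ℓ²(ℤ)`,
`Ψ_f(φ)(x) = Σ_y f(x−y)·φ(y)`, has operator norm equal to the supremum norm of the Fourier
transform of `f`: `‖Ψ_f‖ = sup_{α ∈ [0,1)} |Σ_n f(n)·e^{−2πinα}|`. -/
theorem opNorm_convolution_int_eq_sup_fourier
    (f : ℤ → ℂ) (hf : Summable fun n => ‖f n‖)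
    (T : lp (fun _ : ℤ => ℂ) 2 →L[ℂ] lp (fun _ : ℤ => ℂ) 2)
    (hT : ∀ (φ : lp (fun _ : ℤ => ℂ) 2) (x : ℤ),
      (T φ : ∀ _ : ℤ, ℂ) x = ∑' y : ℤ, f (x - y) * (φ : ∀ _ : ℤ, ℂ) y) :
    ‖T‖ = ⨆ α : Set.Ico (0 : ℝ) 1,
      ‖∑' n : ℤ, f n * Complex.exp (-(2 * π * n * (α : ℝ)) * Complex.I)‖ := by
  set U := (fourierBasis (T := 1)).repr
  set M := ContinuousMap.mulL2 haarAddCircle (fourierSeries (T := 1) f)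
  have hTM : T = (U : _ →L[ℂ] _) ∘L M ∘L (U.symm : _ →L[ℂ] _) := by
    ext φ : 1
    refine lp.ext (funext fun n => ?_)
    rw [hT, ContinuousLinearMap.comp_apply, ContinuousLinearMap.comp_apply,
      LinearIsometryEquiv.coe_coe'', fourierBasis_repr_mulL2_fourierSeries hf,
      ContinuousLinearEquiv.coe_coe, LinearIsometryEquiv.coe_toContinuousLinearEquiv,
      U.apply_symm_apply]
  have hsymbol : ∀ α : Set.Ico (0 : ℝ) 1,
      ∑' n : ℤ, f n * Complex.exp (-(2 * π * n * (α : ℝ)) * Complex.I)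
        = fourierSeries f (-((α : ℝ) : AddCircle (1 : ℝ))) := by
    intro α
    rw [fourierSeries_apply hf]
    refine tsum_congr fun n => ?_
    rw [← coe_neg, fourier_coe_apply]
    push_cast
    ring_nf
  calc ‖T‖ = ‖M‖ := by
        rw [hTM, ContinuousLinearMap.opNorm_linearIsometryEquiv_comp,
          ContinuousLinearMap.opNorm_comp_linearIsometryEquiv]
    _ = ⨆ x, ‖fourierSeries f x‖ := by
        rw [ContinuousMap.norm_mulL2, ContinuousMap.norm_eq_iSup_norm]
    _ = _ := by
        simp only [← iSup_neg_coe_Ico, hsymbol]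
end

section
/- (Arzelà–Ascoli theorem for C₀(X)) Let X be a locally compact Hausdorff space. A family F ⊆ C₀(X) is relatively compact with respect to the supremum norm if and only if: (AA1) F is pointwise bounded, i.e. for every x ∈ X there exists M_x > 0 with |f(x)| < M_x for all f ∈ F; (AA2) F is equicontinuous at every point, i.e. for every x ∈ X and ε > 0 there exists an open neighbourhood U_x of x such that |f(y) − f(x)| < ε for all y ∈ U_x and f ∈ F; and (AA3) F is equivanishing, i.e. for every ε > 0 there exists a compact set K ⊆ X such that sup_{x∈X∖K} |f(x)| < ε for all f ∈ F. -/
open scoped ZeroAtInfty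
open Metric Set Filter

private lemma aa_norm_apply_le {X : Type*} [TopologicalSpace X] (f : C₀(X, ℂ)) (x : X) :
    ‖f x‖ ≤ ‖f‖ := by
  rw [← ZeroAtInftyContinuousMap.norm_toBCF_eq_norm]
  exact f.toBCF.norm_coe_le_norm x

private lemma aa_norm_sub_le_dist {X : Type*} [TopologicalSpace X] (f g : C₀(X, ℂ)) (x : X) :
    ‖f x - g x‖ ≤ dist f g := by
  rw [dist_eq_norm]
  exact aa_norm_apply_le (f - g) x

private lemma aa_equivanish {X : Type*} [TopologicalSpace X] (f : C₀(X, ℂ)) {ε : ℝ}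
    (hε : 0 < ε) : ∃ K : Set X, IsCompact K ∧ ∀ x ∉ K, ‖f x‖ < ε := by
  have h := zero_at_infty f
  rw [Metric.tendsto_nhds] at h
  obtain ⟨K, hK, hK'⟩ := (Filter.hasBasis_cocompact.eventually_iff).mp (h ε hε)
  exact ⟨K, hK, fun x hx => by simpa using hK' hx⟩

private lemma aa_equicont {X : Type*} [TopologicalSpace X] (g : C₀(X, ℂ)) (x : X) {ε : ℝ}
    (hε : 0 < ε) : ∃ V : Set X, IsOpen V ∧ x ∈ V ∧ ∀ y ∈ V, ‖g y - g x‖ < ε := by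
  have hc : ContinuousAt g x := g.continuous.continuousAt
  have h : ∀ᶠ y in nhds x, ‖g y - g x‖ < ε := by
    have := Metric.tendsto_nhds.mp hc ε hε
    filter_upwards [this] with y hy
    rwa [dist_eq_norm] at hy
  obtain ⟨V, hV, hVo, hVx⟩ := eventually_nhds_iff.mp h
  exact ⟨V, hVo, hVx, hV⟩

/-- **Arzelà–Ascoli theorem for `C₀(X)`.** Let `X` be a locally compact Hausdorff space.  A
family `F ⊆ C₀(X)` is relatively compact with respect to the supremum norm if and only if it is
(AA1) pointwise bounded, (AA2) equicontinuous at every point and (AA3) equivanishing. -/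
theorem arzelaAscoli_C0
    {X : Type*} [TopologicalSpace X] [LocallyCompactSpace X] [T2Space X]
    (F : Set C₀(X, ℂ)) :
    IsCompact (closure F) ↔
      ((∀ x : X, ∃ M : ℝ, 0 < M ∧ ∀ f ∈ F, ‖f x‖ < M) ∧
       (∀ x : X, ∀ ε > (0 : ℝ), ∃ U : Set X, IsOpen U ∧ x ∈ U ∧
          ∀ y ∈ U, ∀ f ∈ F, ‖f y - f x‖ < ε) ∧
       (∀ ε > (0 : ℝ), ∃ K : Set X, IsCompact K ∧ ∀ f ∈ F, ∀ x ∉ K, ‖f x‖ < ε)) := by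
  constructor
  · intro hcpt
    have htb : TotallyBounded F := hcpt.totallyBounded.subset subset_closure
    refine ⟨?_, ?_, ?_⟩
    · -- (AA1) pointwise bounded
      intro x
      obtain ⟨C, hC⟩ := (hcpt.isBounded).exists_norm_le
      refine ⟨max C 0 + 1, by positivity, fun f hf => ?_⟩
      calc ‖f x‖ ≤ ‖f‖ := aa_norm_apply_le f x
        _ ≤ C := hC f (subset_closure hf)
        _ ≤ max C 0 := le_max_left _ _
        _ < max C 0 + 1 := lt_add_one _
    · -- (AA2) equicontinuity
      intro x ε hε
      have hε3 : (0 : ℝ) < ε / 3 := by linarith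
      obtain ⟨t, htF, htfin, hcov⟩ :=
        htb.exists_subset (Metric.dist_mem_uniformity hε3)
      choose V hVo hVx hV using fun g : C₀(X, ℂ) => aa_equicont g x hε3
      refine ⟨⋂ g ∈ t, V g, htfin.isOpen_biInter (fun g _ => hVo g),
        mem_biInter (fun g _ => hVx g), fun y hy f hf => ?_⟩
      obtain ⟨g, hg, hfg⟩ := mem_iUnion₂.mp (hcov hf)
      have hfg' : dist f g < ε / 3 := hfg
      have h1 : ‖f y - g y‖ ≤ dist f g := aa_norm_sub_le_dist f g y
      have h2 : ‖g y - g x‖ < ε / 3 := hV g y (by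
        have := mem_iInter₂.mp hy g hg; exact this)
      have h3 : ‖g x - f x‖ ≤ dist f g := by
        rw [norm_sub_rev]; exact aa_norm_sub_le_dist f g x
      calc ‖f y - f x‖ = ‖(f y - g y) + (g y - g x) + (g x - f x)‖ := by ring_nf
        _ ≤ ‖(f y - g y) + (g y - g x)‖ + ‖g x - f x‖ := norm_add_le _ _
        _ ≤ ‖f y - g y‖ + ‖g y - g x‖ + ‖g x - f x‖ := by
            gcongr; exact norm_add_le _ _
        _ < ε / 3 + ε / 3 + ε / 3 := by
            have := h1.trans_lt hfg'
            have := h3.trans_lt hfg'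
            linarith
        _ = ε := by ring
    · -- (AA3) equivanishing
      intro ε hε
      have hε2 : (0 : ℝ) < ε / 2 := by linarith
      obtain ⟨t, htF, htfin, hcov⟩ :=
        htb.exists_subset (Metric.dist_mem_uniformity hε2)
      choose K hKc hK using fun g : C₀(X, ℂ) => aa_equivanish g hε2
      refine ⟨⋃ g ∈ t, K g, htfin.isCompact_biUnion (fun g _ => hKc g), fun f hf x hx => ?_⟩
      obtain ⟨g, hg, hfg⟩ := mem_iUnion₂.mp (hcov hf)
      have hfg' : dist f g < ε / 2 := hfg
      have hxg : x ∉ K g := fun h => hx (mem_biUnion hg h)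
      calc ‖f x‖ = ‖(f x - g x) + g x‖ := by ring_nf
        _ ≤ ‖f x - g x‖ + ‖g x‖ := norm_add_le _ _
        _ < ε / 2 + ε / 2 := by
            have := (aa_norm_sub_le_dist f g x).trans_lt hfg'
            have := hK g x hxg
            linarith
        _ = ε := by ring
  · rintro ⟨h1, h2, h3⟩
    refine TotallyBounded.isCompact_of_isClosed ?_ isClosed_closure
    rw [totallyBounded_closure]
    rw [Metric.totallyBounded_iff]
    intro ε hε
    set δ : ℝ := ε / 5 with hδdef
    have hδ : 0 < δ := by positivity
    obtain ⟨K, hK, hK3⟩ := h3 δ hδ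
    choose U hUo hUx hU using fun x => h2 x δ hδ
    obtain ⟨s, -, hsfin, hsub⟩ := hK.elim_finite_subcover_image (b := (univ : Set X))
      (c := U) (fun x _ => hUo x) (fun x hx => mem_iUnion₂.mpr ⟨x, mem_univ x, hUx x⟩)
    haveI : Fintype s := hsfin.fintype
    choose M hMpos hM using h1
    -- the evaluation map at the points of s
    set Φ : C₀(X, ℂ) → (s → ℂ) := fun f i => f i with hΦ
    have hStb : TotallyBounded (Φ '' F) := by
      have hpi : IsCompact (Set.pi univ fun i : s => closedBall (0 : ℂ) (M i)) :=
        isCompact_univ_pi fun i => isCompact_closedBall 0 (M i)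
      refine hpi.totallyBounded.subset ?_
      rintro - ⟨f, hf, rfl⟩
      intro i _
      simpa [dist_eq_norm] using (hM i f hf).le
    obtain ⟨t', ht'S, ht'fin, ht'cov⟩ := hStb.exists_subset (Metric.dist_mem_uniformity hδ)
    haveI : Fintype t' := ht'fin.fintype
    choose g hgF hgΦ using fun v : t' => ht'S v.2
    refine ⟨range g, finite_range g, fun f hf => ?_⟩
    obtain ⟨v, hv, hfv⟩ := mem_iUnion₂.mp (ht'cov ⟨f, hf, rfl⟩)
    have hfv' : dist (Φ f) v < δ := hfv
    set h : C₀(X, ℂ) := g ⟨v, hv⟩ with hh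
    have hhF : h ∈ F := hgF ⟨v, hv⟩
    have hΦh : Φ h = v := hgΦ ⟨v, hv⟩
    refine mem_iUnion₂.mpr ⟨h, mem_range_self _, ?_⟩
    -- show dist f h < ε
    have key : ∀ x : X, ‖f x - h x‖ ≤ 3 * δ := by
      intro x
      by_cases hxK : x ∈ K
      · obtain ⟨i, his, hxU⟩ := mem_iUnion₂.mp (hsub hxK)
        have hi1 : ‖f x - f i‖ < δ := hU i x hxU f hf
        have hi2 : ‖f i - h i‖ < δ := by
          set j : s := ⟨i, his⟩ with hj
          have h1 : dist (Φ f j) (v j) ≤ dist (Φ f) v := dist_le_pi_dist (Φ f) v j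
          have h2 : dist (Φ f j) (v j) < δ := h1.trans_lt hfv'
          have hv' : v j = h i := by rw [← hΦh]
          rw [hv'] at h2
          simpa [dist_eq_norm, hΦ] using h2
        have hi3 : ‖h i - h x‖ < δ := by
          rw [norm_sub_rev]; exact hU i x hxU h hhF
        calc ‖f x - h x‖ = ‖(f x - f i) + (f i - h i) + (h i - h x)‖ := by ring_nf
          _ ≤ ‖(f x - f i) + (f i - h i)‖ + ‖h i - h x‖ := norm_add_le _ _
          _ ≤ ‖f x - f i‖ + ‖f i - h i‖ + ‖h i - h x‖ := by
              gcongr; exact norm_add_le _ _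
          _ ≤ 3 * δ := by linarith
      · have hfx : ‖f x‖ < δ := hK3 f hf x hxK
        have hhx : ‖h x‖ < δ := hK3 h hhF x hxK
        calc ‖f x - h x‖ ≤ ‖f x‖ + ‖h x‖ := norm_sub_le _ _
          _ ≤ 3 * δ := by linarith
    have : dist f h ≤ 3 * δ := by
      rw [dist_eq_norm, ← ZeroAtInftyContinuousMap.norm_toBCF_eq_norm]
      refine (BoundedContinuousFunction.norm_le (by positivity)).mpr ?_
      intro x
      exact key x
    have : dist f h < ε := this.trans_lt (by rw [hδdef]; linarith)
    exact this
end

section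
/- Let X be a locally compact (not necessarily abelian) topological group with the property that for every open neighbourhood U_e of the neutral element e there exists x_* ∈ U_e such that the set {x_*ⁿ : n ∈ ℕ} is not contained in any compact subset of X. If a family F ⊆ C₀(X) is equicontinuous at every point and equivanishing, then F is pointwise bounded (in fact, there exists a uniform bound M with ‖f‖_∞ ≤ M for all f ∈ F). -/
/-!
By equicontinuity, the set of points at which `F` is bounded is clopen, and by equivanishing it
contains the complement of a compact set; so its complement is compact and open. In such a group
every compact open set `B` is empty: some neighbourhood `V` of `1` satisfies `V * B ⊆ B`, so for
`b ∈ B` and `z ∈ V` all the powers `z ^ n` lie in the compact set `B * {b⁻¹}`. Equicontinuity then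
turns pointwise boundedness into boundedness on compact sets, and equivanishing bounds `F` off a
compact set.
-/

open scoped ZeroAtInfty

open Set Filter Topology Bornology Metric

theorem equicontinuous_of_forall_norm_sub_lt {ι X E : Type*} [TopologicalSpace X]
    [SeminormedAddCommGroup E] {f : ι → X → E}
    (hf : ∀ x : X, ∀ ε > (0 : ℝ), ∃ U : Set X, IsOpen U ∧ x ∈ U ∧
      ∀ y ∈ U, ∀ i, ‖f i y - f i x‖ < ε) :
    Equicontinuous f := fun x => equicontinuousAt_iff_right.2 fun ε hε => by
  obtain ⟨U, hUo, hxU, hU⟩ := hf x ε hε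
  filter_upwards [hUo.mem_nhds hxU] with y hy i
  rw [dist_eq_norm, norm_sub_rev]
  exact hU y hy i

section Equicontinuity

variable {ι X E : Type*} [TopologicalSpace X] [PseudoMetricSpace E] {f : ι → X → E}

theorem isBounded_range_of_forall_dist_le {g h : ι → E} {c : ℝ} (hgh : ∀ i, dist (g i) (h i) ≤ c)
    (hh : IsBounded (range h)) : IsBounded (range g) :=
  hh.cthickening.subset <| range_subset_iff.2 fun i =>
    mem_cthickening_of_dist_le _ _ _ _ (mem_range_self i) (hgh i)

theorem EquicontinuousAt.eventually_isBounded_range_iff {x : X} (hf : EquicontinuousAt f x) :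
    ∀ᶠ y in 𝓝 x, (IsBounded (range fun i => f i y) ↔ IsBounded (range fun i => f i x)) := by
  filter_upwards [equicontinuousAt_iff_right.1 hf 1 one_pos] with y hy
  exact ⟨isBounded_range_of_forall_dist_le fun i => (hy i).le,
    isBounded_range_of_forall_dist_le fun i => (dist_comm (f i x) (f i y) ▸ hy i).le⟩

theorem Equicontinuous.isClopen_setOf_isBounded_range (hf : Equicontinuous f) :
    IsClopen {x | IsBounded (range fun i => f i x)} := by
  have : IsLocallyConstant fun x => IsBounded (range fun i => f i x) :=
    (IsLocallyConstant.iff_eventually_eq _).2 fun x =>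
      (hf x).eventually_isBounded_range_iff.mono fun _ => propext
  simpa using this.isClopen_fiber True

theorem IsCompact.isBounded_iUnion_image {K : Set X} (hK : IsCompact K)
    (hf : ∀ x ∈ K, EquicontinuousAt f x) (hb : ∀ x ∈ K, IsBounded (range fun i => f i x)) :
    IsBounded (⋃ i, f i '' K) := by
  refine hK.induction_on (by simp)
    (fun s t hst ht => ht.subset <| iUnion_mono fun i => image_mono hst)
    (fun s t hs ht => by simpa only [image_union, iUnion_union_distrib] using hs.union ht)
    fun x hx => ⟨_, mem_nhdsWithin_of_mem_nhds
      (equicontinuousAt_iff_right.1 (hf x hx) 1 one_pos), ?_⟩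
  refine ((hb x hx).thickening (δ := 1)).subset <| iUnion_subset fun i => ?_
  rintro _ ⟨y, hy, rfl⟩
  exact mem_thickening_iff.2 ⟨f i x, mem_range_self i, dist_comm (f i x) (f i y) ▸ hy i⟩

end Equicontinuity

theorem IsCompact.eq_empty_of_isOpen {G : Type*} [Group G] [TopologicalSpace G]
    [IsTopologicalGroup G]
    (hG : ∀ U : Set G, IsOpen U → (1 : G) ∈ U →
      ∃ x, x ∈ U ∧ ∀ K : Set G, IsCompact K → ¬ (Set.range (fun n : ℕ => x ^ n) ⊆ K))
    {B : Set G} (hBc : IsCompact B) (hBo : IsOpen B) : B = ∅ := by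
  refine eq_empty_iff_forall_notMem.2 fun b hb => ?_
  obtain ⟨V, hV, hVB⟩ := compact_open_separated_mul_left hBc hBo subset_rfl
  obtain ⟨U, hUV, hUo, h1U⟩ := mem_nhds_iff.1 hV
  obtain ⟨z, hzU, hz⟩ := hG U hUo h1U
  have hpow : ∀ n : ℕ, z ^ n * b ∈ B := by
    intro n
    induction n with
    | zero => simpa using hb
    | succ n ih => simpa [pow_succ', mul_assoc] using hVB (mul_mem_mul (hUV hzU) ih)
  refine hz _ (hBc.image (continuous_mul_const b⁻¹)) (range_subset_iff.2 fun n => ?_)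
  exact ⟨z ^ n * b, hpow n, mul_inv_cancel_right _ _⟩

theorem ZeroAtInftyContinuousMap.norm_le_of_forall_norm_le {X E : Type*} [TopologicalSpace X]
    [SeminormedAddCommGroup E] {f : C₀(X, E)} {M : ℝ} (hM : 0 ≤ M) (hf : ∀ x, ‖f x‖ ≤ M) : ‖f‖ ≤ M :=
  norm_toBCF_eq_norm (f := f) ▸ (BoundedContinuousFunction.norm_le hM).2 hf

theorem pointwise_bounded_of_equicontinuous_equivanishing_general
    {X : Type*} [Group X] [TopologicalSpace X] [IsTopologicalGroup X]
    (hX : ∀ U : Set X, IsOpen U → (1 : X) ∈ U →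
      ∃ x, x ∈ U ∧ ∀ K : Set X, IsCompact K → ¬ (Set.range (fun n : ℕ => x ^ n) ⊆ K))
    (F : Set C₀(X, ℂ))
    (hFeq : ∀ x : X, ∀ ε > (0 : ℝ), ∃ U : Set X, IsOpen U ∧ x ∈ U ∧
      ∀ y ∈ U, ∀ f ∈ F, ‖f y - f x‖ < ε)
    (hFvan : ∀ ε > (0 : ℝ), ∃ K : Set X, IsCompact K ∧ ∀ f ∈ F, ∀ x ∉ K, ‖f x‖ < ε) :
    (∀ x : X, ∃ M : ℝ, 0 < M ∧ ∀ f ∈ F, ‖f x‖ < M) ∧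
      ∃ M : ℝ, ∀ f ∈ F, ‖f‖ ≤ M := by
  have hequi : Equicontinuous fun f : F => ⇑(f : C₀(X, ℂ)) :=
    equicontinuous_of_forall_norm_sub_lt fun x ε hε =>
      (hFeq x ε hε).imp fun _ ⟨hUo, hxU, hU⟩ => ⟨hUo, hxU, fun y hy f => hU y hy f f.2⟩
  obtain ⟨K, hK, hKF⟩ := hFvan 1 one_pos
  have hA := hequi.isClopen_setOf_isBounded_range
  have hKA : {x | IsBounded (range fun f : F => (f : C₀(X, ℂ)) x)}ᶜ ⊆ K := fun x hx => by
    by_contra hxK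
    exact hx <| (isBounded_ball (x := (0 : ℂ)) (r := 1)).subset <|
      range_subset_iff.2 fun f : F => by simpa using hKF f f.2 x hxK
  have hbdd : ∀ x, IsBounded (range fun f : F => (f : C₀(X, ℂ)) x) := by
    simpa [Set.eq_empty_iff_forall_notMem] using
      (hK.of_isClosed_subset hA.isOpen.isClosed_compl hKA).eq_empty_of_isOpen hX
        hA.isClosed.isOpen_compl
  obtain ⟨C, hC⟩ := isBounded_iff_forall_norm_le.1 <|
    hK.isBounded_iUnion_image (fun x _ => hequi x) fun x _ => hbdd x
  have hM : ∀ f ∈ F, ∀ x, ‖f x‖ ≤ max C 1 := fun f hf x => by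
    by_cases hxK : x ∈ K
    · exact (hC _ (mem_iUnion.2 ⟨⟨f, hf⟩, x, hxK, rfl⟩)).trans (le_max_left _ _)
    · exact (hKF f hf x hxK).le.trans (le_max_right _ _)
  refine ⟨fun x => ⟨max C 1 + 1, by positivity, fun f hf => (hM f hf x).trans_lt (lt_add_one _)⟩,
    max C 1, fun f hf =>
      ZeroAtInftyContinuousMap.norm_le_of_forall_norm_le (by positivity) (hM f hf)⟩

/-- Let `X` be a locally compact (not necessarily abelian) group such that every open
neighbourhood of the neutral element contains an element `x_*` whose powers `x_*ⁿ` are not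
contained in any compact set.  Then every family `F ⊆ C₀(X)` which is equicontinuous at every
point and equivanishing is pointwise bounded; in fact it is uniformly bounded in norm. -/
theorem pointwise_bounded_of_equicontinuous_equivanishing
    {X : Type*} [Group X] [TopologicalSpace X] [IsTopologicalGroup X]
    [LocallyCompactSpace X] [T2Space X]
    (hX : ∀ U : Set X, IsOpen U → (1 : X) ∈ U →
      ∃ x, x ∈ U ∧ ∀ K : Set X, IsCompact K → ¬ (Set.range (fun n : ℕ => x ^ n) ⊆ K))
    (F : Set C₀(X, ℂ))
    (hFeq : ∀ x : X, ∀ ε > (0 : ℝ), ∃ U : Set X, IsOpen U ∧ x ∈ U ∧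
      ∀ y ∈ U, ∀ f ∈ F, ‖f y - f x‖ < ε)
    (hFvan : ∀ ε > (0 : ℝ), ∃ K : Set X, IsCompact K ∧ ∀ f ∈ F, ∀ x ∉ K, ‖f x‖ < ε) :
    (∀ x : X, ∃ M : ℝ, 0 < M ∧ ∀ f ∈ F, ‖f x‖ < M) ∧
      ∃ M : ℝ, ∀ f ∈ F, ‖f‖ ≤ M :=
  pointwise_bounded_of_equicontinuous_equivanishing_general hX F hFeq hFvan
end
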